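/- arXiv:2005.13495 — 7 statements merged into one kernel-verified Lean document; each statement's English description precedes it below -/
import Mathlib

section
/- Let v_1,…,v_r ∈ ℝ^{r-1} with ∑ v_i = 0 the unique linear dependence. Let Z ∈ ℝ^{(r-1)×(d+1)}, and let H = {A : tr(A^T Z) > 0} be an open half space through the origin in matrix space. For each i, let U_i = {v_i ⊗ (x,1)^T : x ∈ ℝ^d} and let f_i be the left inverse of g_i(x) = v_i ⊗ (x,1)^T. Then each set f_i(H ∩ U_i) is an open half space (possibly empty or all of ℝ^d) in ℝ^d, and the intersection ⋂_{i=1}^r f_i(H ∩ U_i) is empty. -/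
open Matrix

/-- Sarkaria half-space projection: for an open half space `H` through the origin
in matrix space, each set `f_i(H ∩ U_i)` is an open half space of `ℝ^d`
(possibly empty or all of `ℝ^d`), and the `r` sets have empty intersection. -/
theorem stmt_5 (r d : ℕ) (hr : 2 ≤ r) (v : Fin r → (Fin (r - 1) → ℝ))
    (hsum : ∑ i, v i = 0)
    (hindep : ∀ s : Finset (Fin r), s ≠ Finset.univ →
      LinearIndependent ℝ (fun i : s => v i))
    (Z : Matrix (Fin (r - 1)) (Fin (d + 1)) ℝ)
    (H : Set (Matrix (Fin (r - 1)) (Fin (d + 1)) ℝ))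
    (hH : H = {A | 0 < trace (Aᵀ * Z)})
    (U : Fin r → Set (Matrix (Fin (r - 1)) (Fin (d + 1)) ℝ))
    (hU : U = fun i => Set.range fun x : Fin d → ℝ => vecMulVec (v i) (Fin.snoc x 1))
    (f : Fin r → Matrix (Fin (r - 1)) (Fin (d + 1)) ℝ → (Fin d → ℝ))
    (hf : f = fun i Y => fun j : Fin d =>
      (Yᵀ).mulVec (v i) j.castSucc / ∑ k, v i k ^ 2) :
    (∀ i, (∃ (w : Fin d → ℝ) (c : ℝ), w ≠ 0 ∧
        f i '' (H ∩ U i) = {x | c < dotProduct w x}) ∨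
      f i '' (H ∩ U i) = ∅ ∨ f i '' (H ∩ U i) = Set.univ) ∧
      ⋂ i, f i '' (H ∩ U i) = ∅ := by
  have hr0 : 0 < r := by omega
  -- each v i is nonzero
  have hv : ∀ i, v i ≠ 0 := by
    intro i
    have hne : ({i} : Finset (Fin r)) ≠ Finset.univ := by
      intro h
      have hc := congrArg Finset.card h
      simp [Finset.card_univ] at hc
      omega
    have h1 := (hindep {i} hne).ne_zero ⟨i, Finset.mem_singleton_self i⟩
    simpa using h1
  have hns : ∀ i, 0 < ∑ k, v i k ^ 2 := by
    intro i
    have : ∃ k, v i k ≠ 0 := by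
      by_contra h; push_neg at h; exact hv i (funext h)
    obtain ⟨k, hk⟩ := this
    exact Finset.sum_pos' (fun k _ => sq_nonneg _)
      ⟨k, Finset.mem_univ k, by positivity⟩
  -- f i is a left inverse of g i
  have hfg : ∀ i x, f i (vecMulVec (v i) (Fin.snoc x 1)) = x := by
    intro i x
    funext j
    simp only [hf, mulVec, transpose_apply, vecMulVec_apply, dotProduct]
    have h1 : (∑ l, v i l * (Fin.snoc x 1 : Fin (d+1) → ℝ) j.castSucc * v i l)
        = (Fin.snoc x 1 : Fin (d+1) → ℝ) j.castSucc * ∑ l, v i l ^ 2 := by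
      rw [Finset.mul_sum]
      exact Finset.sum_congr rfl fun l _ => by ring
    rw [h1, mul_div_assoc, div_self (hns i).ne', mul_one, Fin.snoc_castSucc]
  -- trace formula
  have htr : ∀ i (x : Fin d → ℝ),
      trace ((vecMulVec (v i) (Fin.snoc x 1))ᵀ * Z)
        = ∑ k, (Fin.snoc x 1 : Fin (d+1) → ℝ) k * vecMul (v i) Z k := by
    intro i x
    simp only [trace, diag_apply, mul_apply, transpose_apply, vecMulVec_apply,
      vecMul, dotProduct, Finset.mul_sum]
    exact Finset.sum_congr rfl fun k _ => Finset.sum_congr rfl fun j _ => by ring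
  -- image characterization
  have himg : ∀ i, f i '' (H ∩ U i)
      = {x | 0 < ∑ k, (Fin.snoc x 1 : Fin (d+1) → ℝ) k * vecMul (v i) Z k} := by
    intro i
    ext x
    constructor
    · rintro ⟨A, ⟨hA, hAU⟩, rfl⟩
      rw [hU] at hAU; obtain ⟨y, rfl⟩ := hAU
      rw [hfg i y]
      rw [hH] at hA
      simpa only [Set.mem_setOf_eq, htr] using hA
    · intro hx
      refine ⟨vecMulVec (v i) (Fin.snoc x 1), ⟨?_, ?_⟩, hfg i x⟩
      · rw [hH]; simpa only [Set.mem_setOf_eq, htr] using hx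
      · rw [hU]; exact ⟨x, rfl⟩
  -- splitting the sum
  have hsplit : ∀ i (x : Fin d → ℝ),
      (∑ k, (Fin.snoc x 1 : Fin (d+1) → ℝ) k * vecMul (v i) Z k)
        = dotProduct (fun j : Fin d => vecMul (v i) Z j.castSucc) x
          + vecMul (v i) Z (Fin.last d) := by
    intro i x
    rw [Fin.sum_univ_castSucc]
    simp [dotProduct, mul_comm]
  constructor
  · intro i
    by_cases hw : (fun j : Fin d => vecMul (v i) Z j.castSucc) = 0
    · by_cases hc : 0 < vecMul (v i) Z (Fin.last d)
      · right; right
        rw [himg i, Set.eq_univ_iff_forall]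
        intro x
        simp only [Set.mem_setOf_eq, hsplit i x, hw, zero_dotProduct, zero_add]
        exact hc
      · right; left
        rw [himg i, Set.eq_empty_iff_forall_notMem]
        intro x hx
        simp only [Set.mem_setOf_eq, hsplit i x, hw, zero_dotProduct, zero_add] at hx
        exact hc hx
    · left
      refine ⟨fun j => vecMul (v i) Z j.castSucc, -vecMul (v i) Z (Fin.last d), hw, ?_⟩
      rw [himg i]
      ext x
      simp only [Set.mem_setOf_eq, hsplit i x]
      constructor <;> intro h <;> linarith
  · rw [Set.eq_empty_iff_forall_notMem]
    intro x hx
    simp only [Set.mem_iInter] at hx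
    have hpos : ∀ i, 0 < ∑ k, (Fin.snoc x 1 : Fin (d+1) → ℝ) k * vecMul (v i) Z k := by
      intro i
      have := hx i
      rw [himg i] at this
      exact this
    have hsv : ∀ j, ∑ i, v i j = 0 := by
      intro j
      have := congrFun hsum j
      simpa using this
    have hsum0 : ∑ i, ∑ k, (Fin.snoc x 1 : Fin (d+1) → ℝ) k * vecMul (v i) Z k = 0 := by
      rw [Finset.sum_comm]
      have hk : ∀ k, ∑ i, (Fin.snoc x 1 : Fin (d+1) → ℝ) k * vecMul (v i) Z k = 0 := by
        intro k
        rw [← Finset.mul_sum]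
        have h0 : ∑ i, vecMul (v i) Z k = 0 := by
          simp only [vecMul, dotProduct]
          rw [Finset.sum_comm]
          have : ∀ j, ∑ i, v i j * Z j k = 0 := by
            intro j
            rw [← Finset.sum_mul, hsv j, zero_mul]
          simp [this]
        rw [h0, mul_zero]
      simp [hk]
    have hne : (Finset.univ : Finset (Fin r)).Nonempty := ⟨⟨0, hr0⟩, Finset.mem_univ _⟩
    have := Finset.sum_pos (fun i _ => hpos i) hne
    linarith
end

section
/- With the same setup (v_1,…,v_r ∈ ℝ^{r-1} summing to zero with that being the only dependence, Z ∈ ℝ^{(r-1)×(d+1)}), let H̄ = {A : tr(A^T Z) ≥ 0} be the closed half space. Then ⋃_{i=1}^r f_i(H̄ ∩ U_i) = ℝ^d. -/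
open Matrix

/-- For the closed half space `H̄ = {A : tr(AᵀZ) ≥ 0}` through the origin, the
projections `f_i(H̄ ∩ U_i)` cover all of `ℝ^d`. -/
theorem stmt_6 (r d : ℕ) (hr : 2 ≤ r) (v : Fin r → (Fin (r - 1) → ℝ))
    (hsum : ∑ i, v i = 0)
    (hindep : ∀ s : Finset (Fin r), s ≠ Finset.univ →
      LinearIndependent ℝ (fun i : s => v i))
    (Z : Matrix (Fin (r - 1)) (Fin (d + 1)) ℝ)
    (Hc : Set (Matrix (Fin (r - 1)) (Fin (d + 1)) ℝ))
    (hHc : Hc = {A | 0 ≤ trace (Aᵀ * Z)})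
    (U : Fin r → Set (Matrix (Fin (r - 1)) (Fin (d + 1)) ℝ))
    (hU : U = fun i => Set.range fun x : Fin d → ℝ => vecMulVec (v i) (Fin.snoc x 1))
    (f : Fin r → Matrix (Fin (r - 1)) (Fin (d + 1)) ℝ → (Fin d → ℝ))
    (hf : f = fun i Y => fun j : Fin d =>
      (Yᵀ).mulVec (v i) j.castSucc / ∑ k, v i k ^ 2) :
    ⋃ i, f i '' (Hc ∩ U i) = Set.univ := by
  have hr1 : 1 ≤ r := le_trans (by norm_num) hr
  haveI : NeZero r := ⟨by omega⟩
  -- every v i is nonzero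
  have hvne : ∀ i, v i ≠ 0 := by
    intro i
    have hne : ({i} : Finset (Fin r)) ≠ Finset.univ := by
      intro h
      have h1 : ({i} : Finset (Fin r)).card = 1 := Finset.card_singleton i
      rw [h, Finset.card_univ, Fintype.card_fin] at h1
      omega
    have := (hindep {i} hne).ne_zero ⟨i, Finset.mem_singleton_self i⟩
    simpa using this
  ext x
  simp only [Set.mem_iUnion, Set.mem_univ, iff_true]
  set w : Fin (d + 1) → ℝ := Fin.snoc x 1 with hw
  set g : Fin r → ℝ := fun i => trace ((vecMulVec (v i) w)ᵀ * Z) with hg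
  have hgsum : ∑ i, g i = 0 := by
    have : ∑ i, g i = trace ((vecMulVec (∑ i, v i) w)ᵀ * Z) := by
      simp only [hg]
      rw [← trace_sum]
      congr 1
      ext a b
      simp only [Matrix.sum_apply, mul_apply, transpose_apply, vecMulVec_apply,
        Finset.sum_mul]
      rw [Finset.sum_comm]
      simp [Finset.sum_apply, Finset.sum_mul]
    rw [this, hsum]
    have h0 : vecMulVec (0 : Fin (r - 1) → ℝ) w = 0 := by
      ext a b; simp [vecMulVec_apply]
    rw [h0]
    simp
  have hex : ∃ i, 0 ≤ g i := by
    by_contra h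
    push_neg at h
    have hlt : ∑ i, g i < 0 := by
      have : ∀ i ∈ Finset.univ, g i < 0 := by
        intro i _
        exact h i
      calc ∑ i, g i < ∑ _i : Fin r, (0:ℝ) :=
            Finset.sum_lt_sum_of_nonempty Finset.univ_nonempty this
        _ = 0 := by simp
    linarith
  obtain ⟨i, hi⟩ := hex
  refine ⟨i, vecMulVec (v i) w, ⟨?_, ?_⟩, ?_⟩
  · rw [hHc]; exact hi
  · rw [hU]; exact ⟨x, rfl⟩
  · have hS : (∑ k, v i k ^ 2) ≠ 0 := by
      intro h
      apply hvne i
      funext k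
      have := (Finset.sum_eq_zero_iff_of_nonneg (fun k _ => sq_nonneg (v i k))).mp h k
        (Finset.mem_univ k)
      have := pow_eq_zero_iff (n := 2) (by norm_num) |>.mp (this)
      simpa using this
    rw [hf]
    funext j
    simp only []
    have : (vecMulVec (v i) w)ᵀ.mulVec (v i) j.castSucc = w j.castSucc * ∑ k, v i k ^ 2 := by
      simp [mulVec, dotProduct, vecMulVec_apply, Finset.mul_sum]
      congr 1
      funext k
      ring
    rw [this]
    have hwj : w j.castSucc = x j := by simp [hw]
    rw [hwj, mul_div_assoc, div_self hS, mul_one]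
end

section
/- Let A_1,…,A_r ⊆ ℝ^d be finite sets and let x_1,…,x_n be an enumeration of their (disjoint) union with f(j) = i iff x_j ∈ A_i. Let v_1,…,v_r ∈ ℝ^{r-1} with ∑ v_i = 0 the unique dependence. If 0 ∈ conv{v_{f(j)} ⊗ (x_j,1)^T : j = 1,…,n}, then ⋂_{i=1}^r conv(A_i) ≠ ∅. -/
open Matrix

/-- Sarkaria's transform, one direction: if `0` is in the convex hull of the
tensored points `v_{f(j)} ⊗ (x_j, 1)ᵀ`, then the convex hulls of the parts
`A_1, …, A_r` have a common point. -/
theorem stmt_7 (r d n : ℕ) (hr : 2 ≤ r)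
    (v : Fin r → (Fin (r - 1) → ℝ))
    (hsum : ∑ i, v i = 0)
    (hindep : ∀ s : Finset (Fin r), s ≠ Finset.univ →
      LinearIndependent ℝ (fun i : s => v i))
    (x : Fin n → (Fin d → ℝ)) (hx : Function.Injective x)
    (f : Fin n → Fin r)
    (A : Fin r → Set (Fin d → ℝ))
    (hA : ∀ i, A i = (fun j => x j) '' {j | f j = i})
    (h0 : (0 : Matrix (Fin (r - 1)) (Fin (d + 1)) ℝ) ∈
      convexHull ℝ (Set.range fun j : Fin n => vecMulVec (v (f j)) (Fin.snoc (x j) 1))) :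
    (⋂ i, convexHull ℝ (A i)).Nonempty := by
  classical
  set M : Fin n → Matrix (Fin (r - 1)) (Fin (d + 1)) ℝ :=
    fun j => vecMulVec (v (f j)) (Fin.snoc (x j) 1) with hM
  rw [convexHull_range_eq_exists_affineCombination] at h0
  obtain ⟨s, c₀, hc₀, hc₀sum, hc₀comb⟩ := h0
  rw [Finset.affineCombination_eq_linear_combination s M c₀ hc₀sum] at hc₀comb
  set c : Fin n → ℝ := fun j => if j ∈ s then c₀ j else 0 with hc
  have hcnn : ∀ j, 0 ≤ c j := by
    intro j; simp only [hc]; split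
    · exact hc₀ j ‹_›
    · exact le_refl 0
  have hcsum : ∑ j, c j = 1 := by
    rw [← hc₀sum]
    rw [Finset.sum_ite_mem, Finset.univ_inter]
  have hccomb : ∑ j, c j • M j = 0 := by
    rw [← hc₀comb, ← Finset.sum_subset (Finset.subset_univ s)
      (fun j _ hj => by simp [hc, hj])]
    exact Finset.sum_congr rfl fun j hj => by simp [hc, hj]
  -- fiber weights
  set w : Fin r → Fin (d + 1) → ℝ :=
    fun i k => ∑ j ∈ Finset.univ.filter (fun j => f j = i), c j * (Fin.snoc (x j) 1 : Fin (d+1) → ℝ) k with hw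
  -- key: for each coordinate k, ∑ i, w i k • v i = 0
  have hzero : ∀ k, ∑ i, w i k • v i = 0 := by
    intro k
    funext l
    have := congrFun (congrFun hccomb l) k
    simp only [Matrix.sum_apply, Matrix.smul_apply, Matrix.zero_apply, smul_eq_mul,
      vecMulVec_apply, hM] at this
    have hfib := Finset.sum_fiberwise (Finset.univ : Finset (Fin n)) f
      (fun j => c j * (Fin.snoc (x j) 1 : Fin (d+1) → ℝ) k * v (f j) l)
    simp only [Finset.sum_apply, Pi.smul_apply, Pi.zero_apply, smul_eq_mul, hw]
    rw [show (0:ℝ) = ∑ j, c j * (Fin.snoc (x j) 1 : Fin (d+1) → ℝ) k * v (f j) l by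
      rw [← this]; congr 1; funext j; ring]
    rw [← hfib]
    refine Finset.sum_congr rfl fun i _ => ?_
    rw [Finset.sum_mul]
    refine Finset.sum_congr rfl fun j hj => ?_
    rw [Finset.mem_filter] at hj
    rw [hj.2]
  have hr0 : 0 < r := by omega
  set i0 : Fin r := ⟨0, hr0⟩ with hi0
  -- constancy: any linear dependence has equal coefficients
  have hconst : ∀ (a : Fin r → ℝ), ∑ i, a i • v i = 0 → ∀ i, a i = a i0 := by
    intro a ha i
    set b : Fin r → ℝ := fun i => a i - a i0 with hb
    have hb0 : ∑ i, b i • v i = 0 := by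
      have : ∑ i, b i • v i = ∑ i, a i • v i - a i0 • ∑ i, v i := by
        rw [Finset.smul_sum, ← Finset.sum_sub_distrib]
        refine Finset.sum_congr rfl fun i _ => ?_
        rw [hb]; rw [sub_smul]
      rw [this, ha, hsum, smul_zero, sub_zero]
    have hbi0 : b i0 = 0 := by simp [hb]
    by_cases hii0 : i = i0
    · rw [hii0]
    set t : Finset (Fin r) := Finset.univ.erase i0 with ht
    have htne : t ≠ Finset.univ := by
      intro h
      have : i0 ∈ t := h ▸ Finset.mem_univ i0
      exact (Finset.notMem_erase i0 _) this
    have hli := hindep t htne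
    rw [Fintype.linearIndependent_iff] at hli
    have hsum' : ∑ j : t, b j • v (j : Fin r) = 0 := by
      rw [Finset.sum_coe_sort t (fun j => b j • v j)]
      rw [Finset.sum_erase _ (by rw [hbi0, zero_smul])]
      exact hb0
    have hit : i ∈ t := Finset.mem_erase.2 ⟨hii0, Finset.mem_univ i⟩
    have := hli (fun j => b j) hsum' ⟨i, hit⟩
    have : a i - a i0 = 0 := this
    linarith
  have hwconst : ∀ i k, w i k = w i0 k := by
    intro i k
    exact hconst (fun i => w i k) (hzero k) i
  -- the common last-coordinate value
  have hwlast : ∀ i, w i (Fin.last d) = ∑ j ∈ Finset.univ.filter (fun j => f j = i), c j := by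
    intro i
    refine Finset.sum_congr rfl fun j _ => ?_
    rw [Fin.snoc_last, mul_one]
  have hsumlast : ∑ i, w i (Fin.last d) = 1 := by
    rw [← hcsum]
    rw [show ∑ i, w i (Fin.last d) =
        ∑ i, ∑ j ∈ Finset.univ.filter (fun j => f j = i), c j from
      Finset.sum_congr rfl fun i _ => hwlast i]
    exact Finset.sum_fiberwise Finset.univ f c
  set τ : ℝ := w i0 (Fin.last d) with hτ
  have hτr : (r : ℝ) * τ = 1 := by
    rw [← hsumlast]
    rw [Finset.sum_congr rfl (fun i _ => hwconst i (Fin.last d))]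
    simp [mul_comm]
    exact Or.inl hτ
  have hτpos : 0 < τ := by
    have hrr : (0:ℝ) < r := by exact_mod_cast hr0
    nlinarith
  -- fiber sums of weights all equal τ
  have hfibsum : ∀ i, ∑ j ∈ Finset.univ.filter (fun j => f j = i), c j = τ := by
    intro i
    rw [← hwlast i, hwconst i]
  -- the common point
  set p : Fin d → ℝ := (Finset.univ.filter (fun j => f j = i0)).centerMass c x with hp
  have hpc : ∀ i, (Finset.univ.filter (fun j => f j = i)).centerMass c x = p := by
    intro i
    rw [hp, Finset.centerMass, Finset.centerMass, hfibsum i, hfibsum i0]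
    congr 1
    funext k
    have h1 : ∀ i', (∑ j ∈ Finset.univ.filter (fun j => f j = i'), c j • x j) k
        = w i' (Fin.castSucc k) := by
      intro i'
      rw [Finset.sum_apply]
      refine Finset.sum_congr rfl fun j _ => ?_
      rw [Pi.smul_apply, smul_eq_mul, Fin.snoc_castSucc]
    rw [h1 i, h1 i0, hwconst i]
  refine ⟨p, Set.mem_iInter.2 fun i => ?_⟩
  rw [← hpc i]
  refine Finset.centerMass_mem_convexHull _ (fun j _ => hcnn j) ?_ ?_
  · rw [hfibsum i]; exact hτpos
  · intro j hj
    rw [Finset.mem_filter] at hj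
    rw [hA i]
    exact Set.mem_image_of_mem _ hj.2
end

section
/- Conversely, with the same setup: if ⋂_{i=1}^r conv(A_i) ≠ ∅ then 0 ∈ conv{v_{f(j)} ⊗ (x_j,1)^T : j = 1,…,n}. -/
open Matrix Finset

/-- Sarkaria's transform, converse direction: if the convex hulls of the parts `A_1,…,A_r`
have a common point, then `0` is in the convex hull of the tensored points
`v_{f(j)} ⊗ (x_j, 1)ᵀ`. -/
theorem stmt_8 (r d n : ℕ) (hr : 2 ≤ r)
    (v : Fin r → (Fin (r - 1) → ℝ))
    (hsum : ∑ i, v i = 0)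
    (hindep : ∀ s : Finset (Fin r), s ≠ Finset.univ →
      LinearIndependent ℝ (fun i : s => v i))
    (x : Fin n → (Fin d → ℝ)) (hx : Function.Injective x)
    (f : Fin n → Fin r)
    (A : Fin r → Set (Fin d → ℝ))
    (hA : ∀ i, A i = (fun j => x j) '' {j | f j = i})
    (hcap : (⋂ i, convexHull ℝ (A i)).Nonempty) :
    (0 : Matrix (Fin (r - 1)) (Fin (d + 1)) ℝ) ∈
      convexHull ℝ (Set.range fun j : Fin n => vecMulVec (v (f j)) (Fin.snoc (x j) 1)) := by
  obtain ⟨p, hp⟩ := hcap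
  simp only [Set.mem_iInter] at hp
  have hrpos : (0:ℝ) < r := by positivity
  -- for each i, get weights on Fin n supported on the fiber of i
  have key : ∀ i : Fin r, ∃ w : Fin n → ℝ, (∀ j, 0 ≤ w j) ∧ (∀ j, f j ≠ i → w j = 0) ∧
      ∑ j, w j = 1 ∧ ∑ j, w j • x j = p := by
    intro i
    have hpi := hp i
    rw [hA i] at hpi
    have himg : (fun j => x j) '' {j | f j = i} =
        ↑((Finset.univ.filter (fun j => f j = i)).image x) := by
      ext y
      simp [Set.mem_image]
    rw [himg, Finset.convexHull_eq] at hpi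
    obtain ⟨w, hw0, hw1, hwc⟩ := hpi
    set S : Finset (Fin n) := Finset.univ.filter (fun j => f j = i) with hS
    have hinj : Set.InjOn x ↑S := hx.injOn
    refine ⟨fun j => if f j = i then w (x j) else 0, ?_, ?_, ?_, ?_⟩
    · intro j
      dsimp only
      split
      · next h => exact hw0 _ (Finset.mem_image_of_mem x (by simp [hS, h]))
      · exact le_refl 0
    · intro j hj; simp [hj]
    · rw [← hw1, Finset.sum_image hinj]
      dsimp only
      rw [Finset.sum_filter]
    · rw [← hwc, Finset.centerMass_eq_of_sum_1 _ _ hw1, Finset.sum_image hinj]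
      dsimp only
      rw [Finset.sum_filter]
      apply Finset.sum_congr rfl
      intro j _
      by_cases h : f j = i <;> simp [h]
  choose w hw0 hwsupp hwsum hwp using key
  set μ : Fin n → ℝ := fun j => (r:ℝ)⁻¹ * w (f j) j with hμ
  have hμ0 : ∀ j, 0 ≤ μ j := fun j => by
    have := hw0 (f j) j
    positivity
  -- fiberwise sums
  have hfib : ∀ (g : Fin n → ℝ), ∑ j, g j = ∑ i : Fin r, ∑ j ∈ Finset.univ.filter (fun j => f j = i), g j := by
    intro g
    exact (Finset.sum_fiberwise Finset.univ f g).symm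
  have hwsum' : ∀ i, ∑ j ∈ Finset.univ.filter (fun j => f j = i), w i j = 1 := by
    intro i
    rw [Finset.sum_filter, ← hwsum i]
    apply Finset.sum_congr rfl
    intro j _
    by_cases h : f j = i <;> simp [h, hwsupp i j]
  have hwp' : ∀ i, ∑ j ∈ Finset.univ.filter (fun j => f j = i), w i j • x j = p := by
    intro i
    rw [Finset.sum_filter, ← hwp i]
    apply Finset.sum_congr rfl
    intro j _
    by_cases h : f j = i <;> simp [h, hwsupp i j]
  have hμsum : ∑ j, μ j = 1 := by
    rw [hfib μ]
    have : ∀ i : Fin r, ∑ j ∈ Finset.univ.filter (fun j => f j = i), μ j = (r:ℝ)⁻¹ := by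
      intro i
      rw [hμ]
      calc ∑ j ∈ Finset.univ.filter (fun j => f j = i), (r:ℝ)⁻¹ * w (f j) j
          = ∑ j ∈ Finset.univ.filter (fun j => f j = i), (r:ℝ)⁻¹ * w i j := by
            apply Finset.sum_congr rfl; intro j hj
            simp only [Finset.mem_filter] at hj
            rw [hj.2]
        _ = (r:ℝ)⁻¹ := by rw [← Finset.mul_sum, hwsum' i, mul_one]
    rw [Finset.sum_congr rfl fun i _ => this i]
    simp [Finset.card_univ]
    field_simp
  apply mem_convexHull_of_exists_fintype μ (fun j : Fin n => vecMulVec (v (f j)) (Fin.snoc (x j) 1))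
    hμ0 hμsum (fun j => Set.mem_range_self j)
  -- the weighted sum is zero
  ext a b
  simp only [Matrix.sum_apply, Matrix.smul_apply, vecMulVec_apply, smul_eq_mul,
    Matrix.zero_apply]
  have hfib2 : ∑ j, μ j * (v (f j) a * (Fin.snoc (x j) 1 : Fin (d+1) → ℝ) b)
      = ∑ i : Fin r, ∑ j ∈ Finset.univ.filter (fun j => f j = i),
          μ j * (v (f j) a * (Fin.snoc (x j) 1 : Fin (d+1) → ℝ) b) :=
    hfib fun j => μ j * (v (f j) a * (Fin.snoc (x j) 1 : Fin (d+1) → ℝ) b)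
  rw [hfib2]
  have step : ∀ i : Fin r, ∑ j ∈ Finset.univ.filter (fun j => f j = i),
      μ j * (v (f j) a * (Fin.snoc (x j) 1 : Fin (d+1) → ℝ) b)
      = v i a * ((r:ℝ)⁻¹ * (Fin.snoc p 1 : Fin (d+1) → ℝ) b) := by
    intro i
    have : ∑ j ∈ Finset.univ.filter (fun j => f j = i),
        μ j * (v (f j) a * (Fin.snoc (x j) 1 : Fin (d+1) → ℝ) b)
        = v i a * ((r:ℝ)⁻¹ * ∑ j ∈ Finset.univ.filter (fun j => f j = i),
            w i j * (Fin.snoc (x j) 1 : Fin (d+1) → ℝ) b) := by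
      rw [Finset.mul_sum, Finset.mul_sum]
      apply Finset.sum_congr rfl
      intro j hj
      simp only [Finset.mem_filter] at hj
      simp only [hμ, hj.2]
      ring
    rw [this]
    congr 1
    congr 1
    -- ∑ w i j * snoc (x j) 1 b = snoc p 1 b
    refine Fin.lastCases ?_ ?_ b
    · simp only [Fin.snoc_last]
      simpa using hwsum' i
    · intro b'
      simp only [Fin.snoc_castSucc]
      have := congrFun (hwp' i) b'
      simp only [Finset.sum_apply, Pi.smul_apply, smul_eq_mul] at this
      exact this
  rw [Finset.sum_congr rfl fun i _ => step i]
  rw [← Finset.sum_mul]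
  have : ∑ i : Fin r, v i a = 0 := by
    have := congrFun hsum a
    simpa using this
  rw [this, zero_mul]
end

section
/- Suppose N color classes X_1,…,X_N, each consisting of r points in ℝ^d, form a perfect split configuration witnessed by open half spaces H_1,…,H_r. Then for every colorful partition A_1,…,A_r of the points (each A_i containing exactly one point of each color class), there exists a set of at most ⌈p_r N⌉ color classes whose removal makes ⋂_i conv(A_i ∖ removed points) = ∅, where p_r is the probability a random permutation of [r] has a fixed point. -/
open Nat Matrix

lemma aux_fix (r : ℕ) :
    (Finset.univ.filter fun τ : Equiv.Perm (Fin r) => ∃ i, τ i = i).card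
      + numDerangements r = Nat.factorial r := by
  classical
  have h1 : (Finset.univ.filter fun τ : Equiv.Perm (Fin r) => ¬ ∃ i, τ i = i).card
      = numDerangements r := by
    rw [← card_derangements_fin_eq_numDerangements (n := r)]
    rw [← Fintype.card_subtype]
    apply Fintype.card_congr
    apply Equiv.subtypeEquivRight
    intro τ
    simp [derangements, not_exists]
  have h2 := Finset.card_filter_add_card_filter_not
    (s := (Finset.univ : Finset (Equiv.Perm (Fin r))))
    (p := fun τ => ∃ i, τ i = i)
  rw [h1, Finset.card_univ, Fintype.card_perm, Fintype.card_fin] at h2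
  exact h2

lemma aux_derange_le (r : ℕ) : numDerangements r ≤ Nat.factorial r := by
  have := aux_fix r; omega

lemma aux_count (r : ℕ) (u : Equiv.Perm (Fin r)) :
    (Finset.univ.filter fun ρ : Equiv.Perm (Fin r) => ∃ i, ρ i = u i).card
      = Nat.factorial r - numDerangements r := by
  classical
  have hb : (Finset.univ.filter fun ρ : Equiv.Perm (Fin r) => ∃ i, ρ i = u i).card
      = (Finset.univ.filter fun τ : Equiv.Perm (Fin r) => ∃ i, τ i = i).card := by
    refine Finset.card_bij' (fun ρ _ => ρ.trans u.symm) (fun τ _ => τ.trans u) ?_ ?_ ?_ ?_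
    · intro ρ hρ
      simp only [Finset.mem_filter, Finset.mem_univ, true_and] at hρ ⊢
      obtain ⟨i, hi⟩ := hρ
      exact ⟨i, by simp [Equiv.trans_apply, hi]⟩
    · intro τ hτ
      simp only [Finset.mem_filter, Finset.mem_univ, true_and] at hτ ⊢
      obtain ⟨i, hi⟩ := hτ
      exact ⟨i, by simp [Equiv.trans_apply, hi]⟩
    · intro ρ _
      ext i
      simp [Equiv.trans_apply]
    · intro τ _
      ext i
      simp [Equiv.trans_apply]
  have := aux_fix r
  omega

/-- In a perfect split configuration of `N` color classes of `r` points each in `ℝ^d`,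
every colorful partition can be broken by removing at most `⌈p_r N⌉` color classes. -/
theorem stmt_9 (N r d : ℕ) (hr : 2 ≤ r) (hN : 1 ≤ N)
    (X : Fin N → Fin r → (Fin d → ℝ))
    (w : Fin r → (Fin d → ℝ)) (c : Fin r → ℝ)
    (hw : ∀ i, w i ≠ 0)
    -- the open half spaces H_i = {x | ⟨w i, x⟩ > c i} have empty intersection
    (hempty : ⋂ i, {x : Fin d → ℝ | c i < dotProduct (w i) x} = ∅)
    -- each half space contains exactly r - 1 of the r points of each color class
    (hsplit : ∀ i : Fin r, ∀ j : Fin N,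
      (Finset.univ.filter fun k : Fin r => c i < dotProduct (w i) (X j k)).card = r - 1)
    -- a colorful partition: the point `X j k` is assigned to part `π j k`
    (π : Fin N → Equiv.Perm (Fin r)) :
    ∃ R : Finset (Fin N),
      R.card ≤ ⌈(1 - (numDerangements r : ℝ) / (r ! : ℝ)) * N⌉₊ ∧
      ⋂ i : Fin r, convexHull ℝ
        ((fun j : Fin N => X j ((π j).symm i)) '' {j | j ∉ R}) = ∅ := by
  classical
  -- the unique point of class j missed by half space i
  have hone : ∀ (i : Fin r) (j : Fin N),
      (Finset.univ.filter fun k : Fin r => ¬ c i < dotProduct (w i) (X j k)).card = 1 := by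
    intro i j
    have h2 := Finset.card_filter_add_card_filter_not
      (s := (Finset.univ : Finset (Fin r)))
      (p := fun k => c i < dotProduct (w i) (X j k))
    rw [hsplit i j, Finset.card_univ, Fintype.card_fin] at h2
    omega
  have hex : ∀ (i : Fin r) (j : Fin N), ∃ a : Fin r,
      ∀ k, ¬ c i < dotProduct (w i) (X j k) ↔ k = a := by
    intro i j
    obtain ⟨a, ha⟩ := Finset.card_eq_one.mp (hone i j)
    refine ⟨a, fun k => ?_⟩
    constructor
    · intro hk
      have : k ∈ Finset.univ.filter fun k : Fin r => ¬ c i < dotProduct (w i) (X j k) :=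
        Finset.mem_filter.mpr ⟨Finset.mem_univ _, hk⟩
      rw [ha] at this
      simpa using this
    · intro hk
      have : k ∈ ({a} : Finset (Fin r)) := by simp [hk]
      rw [← ha] at this
      exact (Finset.mem_filter.mp this).2
  choose e he using hex
  -- key: any other point is in the half space
  have hkey : ∀ (i : Fin r) (j : Fin N) (k : Fin r), k ≠ e i j →
      c i < dotProduct (w i) (X j k) := by
    intro i j k hk
    by_contra h
    exact hk ((he i j k).mp h)
  -- e (· j) is bijective
  have hbij : ∀ j : Fin N, Function.Bijective (fun i => e i j) := by
    intro j
    rw [Fintype.bijective_iff_surjective_and_card]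
    refine ⟨?_, rfl⟩
    intro k
    have hx : X j k ∉ ⋂ i, {x : Fin d → ℝ | c i < dotProduct (w i) x} := by
      rw [hempty]; exact Set.notMem_empty _
    rw [Set.mem_iInter] at hx
    push_neg at hx
    obtain ⟨i, hi⟩ := hx
    exact ⟨i, ((he i j k).mp hi).symm⟩
  let E : Fin N → Equiv.Perm (Fin r) := fun j => Equiv.ofBijective _ (hbij j)
  have hE : ∀ j i, E j i = e i j := fun j i => rfl
  -- bad classes for a matching permutation ρ
  let bad : Equiv.Perm (Fin r) → Finset (Fin N) := fun ρ =>
    Finset.univ.filter fun j => ∃ i, (π j).symm i = e (ρ i) j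
  -- for fixed j, count the ρ for which j is bad
  have hcnt : ∀ j : Fin N,
      (Finset.univ.filter fun ρ : Equiv.Perm (Fin r) =>
        ∃ i, (π j).symm i = e (ρ i) j).card = Nat.factorial r - numDerangements r := by
    intro j
    have hiff : ∀ ρ : Equiv.Perm (Fin r),
        (∃ i, (π j).symm i = e (ρ i) j) ↔
        (∃ i, ρ i = ((π j).symm.trans (E j).symm) i) := by
      intro ρ
      constructor
      · rintro ⟨i, hi⟩
        refine ⟨i, ?_⟩
        have h' : E j (ρ i) = (π j).symm i := (hE j (ρ i)).trans hi.symm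
        simp only [Equiv.trans_apply]
        rw [Equiv.eq_symm_apply]
        exact h'
      · rintro ⟨i, hi⟩
        refine ⟨i, ?_⟩
        simp only [Equiv.trans_apply] at hi
        rw [← hE j (ρ i), hi]
        simp
    simp only [hiff]
    exact aux_count r _
  -- total over all ρ
  have hsum : ∑ ρ : Equiv.Perm (Fin r), (bad ρ).card
      = N * (Nat.factorial r - numDerangements r) := by
    have hc : ∀ ρ : Equiv.Perm (Fin r), (bad ρ).card
        = ∑ j : Fin N, if (∃ i, (π j).symm i = e (ρ i) j) then 1 else 0 := by
      intro ρ; exact Finset.card_filter _ _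
    simp only [hc]
    rw [Finset.sum_comm]
    have hc2 : ∀ j : Fin N,
        (∑ ρ : Equiv.Perm (Fin r), if (∃ i, (π j).symm i = e (ρ i) j) then 1 else 0)
        = Nat.factorial r - numDerangements r := by
      intro j
      rw [← Finset.card_filter]
      exact hcnt j
    simp only [hc2]
    simp [Finset.sum_const, mul_comm]
  -- pick a ρ whose bad set is at most average
  have hρ : ∃ ρ : Equiv.Perm (Fin r),
      (bad ρ).card * Nat.factorial r ≤ N * (Nat.factorial r - numDerangements r) := by
    by_contra h
    push_neg at h
    have hle := Finset.card_nsmul_le_sum Finset.univ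
      (fun ρ : Equiv.Perm (Fin r) => (bad ρ).card * Nat.factorial r)
      (N * (Nat.factorial r - numDerangements r) + 1) (fun ρ _ => h ρ)
    rw [Finset.card_univ, Fintype.card_perm, Fintype.card_fin] at hle
    rw [← Finset.sum_mul, hsum] at hle
    have hpos := Nat.factorial_pos r
    rw [smul_eq_mul] at hle
    nlinarith
  obtain ⟨ρ, hρ⟩ := hρ
  refine ⟨bad ρ, ?_, ?_⟩
  · -- cardinality bound
    have hD := aux_derange_le r
    have hfpos : (0 : ℝ) < (Nat.factorial r : ℝ) := by exact_mod_cast Nat.factorial_pos r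
    have hcast : ((bad ρ).card : ℝ) ≤ (1 - (numDerangements r : ℝ) / (r ! : ℝ)) * N := by
      have h1 : ((bad ρ).card : ℝ) * (Nat.factorial r : ℝ)
          ≤ (N : ℝ) * ((Nat.factorial r : ℝ) - (numDerangements r : ℝ)) := by
        calc ((bad ρ).card : ℝ) * (Nat.factorial r : ℝ)
            = (((bad ρ).card * Nat.factorial r : ℕ) : ℝ) := by push_cast; ring
          _ ≤ ((N * (Nat.factorial r - numDerangements r) : ℕ) : ℝ) := by exact_mod_cast hρ
          _ = (N : ℝ) * ((Nat.factorial r : ℝ) - (numDerangements r : ℝ)) := by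
              rw [Nat.cast_mul, Nat.cast_sub hD]
      rw [show (1 - (numDerangements r : ℝ) / (r ! : ℝ)) * N
          = (N : ℝ) * ((Nat.factorial r : ℝ) - (numDerangements r : ℝ)) / (Nat.factorial r : ℝ) by
        field_simp]
      rw [le_div_iff₀ hfpos]
      exact h1
    calc (bad ρ).card = ⌈(((bad ρ).card : ℝ))⌉₊ := (Nat.ceil_natCast _).symm
      _ ≤ _ := Nat.ceil_mono hcast
  · -- geometric emptiness
    rw [Set.eq_empty_iff_forall_notMem]
    intro x hx
    rw [Set.mem_iInter] at hx
    have hxe : x ∉ ⋂ i, {y : Fin d → ℝ | c i < dotProduct (w i) y} := by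
      rw [hempty]; exact Set.notMem_empty _
    rw [Set.mem_iInter] at hxe
    push_neg at hxe
    obtain ⟨i0, hi0⟩ := hxe
    have hsub : convexHull ℝ
        ((fun j : Fin N => X j ((π j).symm (ρ.symm i0))) '' {j | j ∉ bad ρ})
        ⊆ {y : Fin d → ℝ | c i0 < dotProduct (w i0) y} := by
      apply convexHull_min
      · rintro y ⟨j, hj, rfl⟩
        have hj' : ¬ ∃ i, (π j).symm i = e (ρ i) j := by
          intro hcon
          exact hj (Finset.mem_filter.mpr ⟨Finset.mem_univ _, hcon⟩)
        push_neg at hj'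
        have hne : (π j).symm (ρ.symm i0) ≠ e i0 j := by
          have := hj' (ρ.symm i0)
          rwa [Equiv.apply_symm_apply] at this
        exact hkey i0 j _ hne
      · exact convex_halfSpace_gt
          ⟨fun a b => dotProduct_add _ _ _, fun t a => dotProduct_smul _ _ _⟩ (c i0)
    exact hi0 (hsub (hx (ρ.symm i0)))
end

section
/- If r > d + 1, then there is no perfect split configuration of N color classes of r points each in ℝ^d. That is, there do not exist open half spaces H_1,…,H_r in ℝ^d with empty intersection such that each half space contains exactly r−1 points of each color class (assuming N ≥ 1). -/
open Matrix

/-- For `r > d + 1` there is no perfect split configuration of `N ≥ 1` color classes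
of `r` points each in `ℝ^d`. -/
theorem stmt_10 (N r d : ℕ) (hr : d + 1 < r) (hN : 1 ≤ N)
    (X : Fin N → Fin r → (Fin d → ℝ)) :
    ¬ ∃ (w : Fin r → (Fin d → ℝ)) (c : Fin r → ℝ),
      (∀ i, w i ≠ 0) ∧
      (⋂ i, {x : Fin d → ℝ | c i < dotProduct (w i) x}) = ∅ ∧
      (∀ i : Fin r, ∀ j : Fin N,
        (Finset.univ.filter fun k : Fin r =>
          c i < dotProduct (w i) (X j k)).card = r - 1) := by
  rintro ⟨w, c, hw, hempty, hcard⟩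
  have hr1 : 1 ≤ r := by omega
  set j0 : Fin N := ⟨0, hN⟩
  set P : Fin r → Fin d → ℝ := X j0 with hP
  -- each half space excludes exactly one point of class j0
  have hx : ∀ i : Fin r, ∃ ki : Fin r, ∀ k : Fin r, k ≠ ki →
      c i < dotProduct (w i) (P k) := by
    intro i
    have h1 : (Finset.univ.filter fun k : Fin r =>
        ¬ c i < dotProduct (w i) (P k)).card = 1 := by
      have := Finset.card_filter_add_card_filter_not
        (s := (Finset.univ : Finset (Fin r)))
        (p := fun k : Fin r => c i < dotProduct (w i) (P k))
      rw [hcard i j0] at this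
      simp only [Finset.card_univ, Fintype.card_fin] at this
      omega
    obtain ⟨ki, hki⟩ := Finset.card_eq_one.mp h1
    refine ⟨ki, fun k hk => ?_⟩
    by_contra hc
    have : k ∈ Finset.univ.filter fun k : Fin r =>
        ¬ c i < dotProduct (w i) (P k) := by
      simp only [Finset.mem_filter, Finset.mem_univ, true_and]; exact hc
    rw [hki, Finset.mem_singleton] at this
    exact hk this
  choose f hf using hx
  -- the points are affinely dependent
  have hdep : ¬ AffineIndependent ℝ P := by
    intro h
    have h2 := h.card_le_finrank_succ
    have h3 : Module.finrank ℝ ↥(vectorSpan ℝ (Set.range P)) ≤ d := by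
      have := Submodule.finrank_le (vectorSpan ℝ (Set.range P))
      simpa [Module.finrank_fintype_fun_eq_card] using this
    simp only [Fintype.card_fin] at h2
    omega
  obtain ⟨I, z, hz1, hz2⟩ := Convex.radon_partition (𝕜 := ℝ) hdep
  -- the half spaces are convex
  have hconv : ∀ i : Fin r, Convex ℝ {x : Fin d → ℝ | c i < dotProduct (w i) x} :=
    fun i => convex_halfSpace_gt
      ⟨fun x y => dotProduct_add _ _ _, fun a x => by
        simp [dotProduct_smul, smul_eq_mul]⟩ (c i)
  -- z belongs to every half space
  have hz : z ∈ ⋂ i, {x : Fin d → ℝ | c i < dotProduct (w i) x} := by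
    refine Set.mem_iInter.mpr fun i => ?_
    by_cases hfi : f i ∈ I
    · -- all points of Iᶜ are in H_i
      have hsub : P '' Iᶜ ⊆ {x : Fin d → ℝ | c i < dotProduct (w i) x} := by
        rintro _ ⟨k, hk, rfl⟩
        exact hf i k (fun h => hk (h ▸ hfi))
      exact (convexHull_min hsub (hconv i)) hz2
    · have hsub : P '' I ⊆ {x : Fin d → ℝ | c i < dotProduct (w i) x} := by
        rintro _ ⟨k, hk, rfl⟩
        exact hf i k (fun h => hfi (h ▸ hk))
      exact (convexHull_min hsub (hconv i)) hz1
  rw [hempty] at hz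
  exact hz
end

section
/- Let r > d+1 and let T be an r×r {0,1}-matrix such that (1) every column has at least one nonzero entry, and (2) there exist rows i_1,…,i_{d+1} such that every column has a nonzero entry in one of these rows. Among all such matrices, the probability that a uniformly random permutation σ of [r] hits at least one nonzero entry (i.e., T(σ(j),j)=1 for some j) is minimized by a matrix in which each column has exactly one nonzero entry, located in one of the rows i_1,…,i_{d+1}, and each of these d+1 rows contains either ⌊r/(d+1)⌋ or ⌈r/(d+1)⌉ ones. -/
open Nat Finset

namespace Stmt13Aux


variable {r : ℕ}

def Hit (f : Fin r → Fin r) : Finset (Equiv.Perm (Fin r)) :=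
  Finset.univ.filter fun σ => ∃ j, σ j = f j

def fib (f : Fin r → Fin r) (v : Fin r) : Finset (Fin r) :=
  Finset.univ.filter fun j => f j = v

lemma mem_Hit {f : Fin r → Fin r} {σ : Equiv.Perm (Fin r)} :
    σ ∈ Hit f ↔ ∃ j, σ j = f j := by simp [Hit]

lemma mem_fib {f : Fin r → Fin r} {v j : Fin r} : j ∈ fib f v ↔ f j = v := by simp [fib]

lemma mem_sdiff_Hit {g : Fin r → Fin r} {c u : Fin r} (hu : u ≠ g c)
    {σ : Equiv.Perm (Fin r)} :
    σ ∈ Hit (Function.update g c u) \ Hit g ↔ σ c = u ∧ ∀ j, j ≠ c → σ j ≠ g j := by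
  constructor
  · intro h
    rw [Finset.mem_sdiff] at h
    obtain ⟨h1, h2⟩ := h
    rw [mem_Hit] at h1
    rw [mem_Hit] at h2
    push_neg at h2
    obtain ⟨j, hj⟩ := h1
    rcases eq_or_ne j c with rfl | hjc
    · rw [Function.update_self] at hj
      exact ⟨hj, fun j hj' => h2 j⟩
    · rw [Function.update_of_ne hjc] at hj
      exact absurd hj (h2 j)
  · rintro ⟨h1, h2⟩
    rw [Finset.mem_sdiff, mem_Hit, mem_Hit]
    refine ⟨⟨c, by simp [h1]⟩, ?_⟩
    push_neg
    intro j
    rcases eq_or_ne j c with rfl | hjc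
    · rw [h1]; exact hu
    · exact h2 j hjc

lemma exchange (f : Fin r → Fin r) (c w : Fin r) (hw : w ≠ f c)
    (hab : (fib f w).card + 2 ≤ (fib f (f c)).card) :
    (Hit (Function.update f c w)).card ≤ (Hit f).card := by
  classical
  set v := f c with hv
  set f' := Function.update f c w with hf'
  have hvw : v ≠ w := Ne.symm hw
  -- the injection ι from fib f w into (fib f v).erase c
  have hcard : (fib f w).card ≤ ((fib f v).erase c).card := by
    have hc : c ∈ fib f v := mem_fib.mpr rfl
    rw [Finset.card_erase_of_mem hc]
    omega
  obtain ⟨t, hts, htc⟩ := Finset.exists_subset_card_eq hcard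
  have e : (fib f w : Type) ≃ t := Finset.equivOfCardEq htc.symm
  set ι : Fin r → Fin r := fun x => if h : x ∈ fib f w then ((e ⟨x, h⟩ : t) : Fin r) else x
    with hι
  have hι1 : ∀ x (h : x ∈ fib f w), ι x ∈ (fib f v).erase c := by
    intro x h
    simp only [hι, dif_pos h]
    exact hts (e ⟨x, h⟩).2
  have hι2 : ∀ x y (hx : x ∈ fib f w) (hy : y ∈ fib f w), ι x = ι y → x = y := by
    intro x y hx hy hxy
    simp only [hι, dif_pos hx, dif_pos hy] at hxy
    have := e.injective (Subtype.coe_injective hxy)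
    exact Subtype.ext_iff.mp this
  -- characterizations
  have memD : ∀ {σ : Equiv.Perm (Fin r)},
      σ ∈ Hit f' \ Hit f ↔ σ c = w ∧ ∀ j, j ≠ c → σ j ≠ f j := fun {σ} => mem_sdiff_Hit hw
  have hff' : f = Function.update f' c v := by
    rw [hf', Function.update_idem, hv, Function.update_eq_self]
  have hf'c : f' c = w := Function.update_self _ _ _
  have memD' : ∀ {σ : Equiv.Perm (Fin r)},
      σ ∈ Hit f \ Hit f' ↔ σ c = v ∧ ∀ j, j ≠ c → σ j ≠ f j := by
    intro σ
    have hmm := mem_sdiff_Hit (g := f') (c := c) (u := v)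
      (by rw [hf'c]; exact hvw) (σ := σ)
    rw [← hff'] at hmm
    rw [hmm]
    constructor
    · rintro ⟨h1, h2⟩
      refine ⟨h1, fun j hj => ?_⟩
      have := h2 j hj
      rwa [hf', Function.update_of_ne hj] at this
    · rintro ⟨h1, h2⟩
      refine ⟨h1, fun j hj => ?_⟩
      rw [hf', Function.update_of_ne hj]
      exact h2 j hj
  -- the injection
  set Phi : Equiv.Perm (Fin r) → Equiv.Perm (Fin r) := fun σ =>
    if f (σ.symm v) = w
    then ((Equiv.swap (σ.symm v) (ι (σ.symm v))).trans σ).trans (Equiv.swap v w)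
    else (Equiv.swap c (σ.symm v)).trans σ
    with hPhidef
  have key : (Hit f' \ Hit f).card ≤ (Hit f \ Hit f').card := by
    apply Finset.card_le_card_of_injOn Phi
    · -- maps to
      intro σ hσ
      obtain ⟨h1, h2⟩ := memD.mp hσ
      set j₀ := σ.symm v with hj₀def
      have hj₀ : σ j₀ = v := σ.apply_symm_apply v
      have hj₀c : j₀ ≠ c := by
        intro h; rw [h, h1] at hj₀; exact hvw hj₀.symm
      have hfj₀ : f j₀ ≠ v := fun h => h2 j₀ hj₀c (hj₀.trans h.symm)
      by_cases hb : f j₀ = w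
      · -- case A
        have hPhiσ : Phi σ = ((Equiv.swap j₀ (ι j₀)).trans σ).trans (Equiv.swap v w) := by
          rw [hPhidef]; simp only [← hj₀def, if_pos hb]
        set j₁ := ι j₀ with hj₁def
        have hj₁mem := hι1 j₀ (mem_fib.mpr hb)
        have hj₁c : j₁ ≠ c := (Finset.mem_erase.mp hj₁mem).1
        have hfj₁ : f j₁ = v := mem_fib.mp (Finset.mem_erase.mp hj₁mem).2
        have hj₁j₀ : j₁ ≠ j₀ := by
          intro h
          rw [h] at hfj₁
          exact hvw (hfj₁.symm.trans hb)
        rw [Finset.mem_coe, memD', hPhiσ]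
        constructor
        · simp only [Equiv.trans_apply]
          rw [Equiv.swap_apply_of_ne_of_ne (Ne.symm hj₀c) (Ne.symm hj₁c), h1,
            Equiv.swap_apply_right]
        · intro j hjc
          simp only [Equiv.trans_apply]
          rcases eq_or_ne j j₀ with rfl | hjj₀
          · rw [Equiv.swap_apply_left]
            have hσj₁v : σ j₁ ≠ v := fun h => hj₁j₀ (σ.injective (h.trans hj₀.symm))
            have hσj₁w : σ j₁ ≠ w := fun h => hj₁c (σ.injective (h.trans h1.symm))
            rw [Equiv.swap_apply_of_ne_of_ne hσj₁v hσj₁w, hb]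
            exact hσj₁w
          · rcases eq_or_ne j j₁ with rfl | hjj₁
            · rw [Equiv.swap_apply_right, hj₀, Equiv.swap_apply_left, hfj₁]
              exact Ne.symm hvw
            · rw [Equiv.swap_apply_of_ne_of_ne hjj₀ hjj₁]
              have hσjv : σ j ≠ v := fun h => hjj₀ (σ.injective (h.trans hj₀.symm))
              have hσjw : σ j ≠ w := fun h => hjc (σ.injective (h.trans h1.symm))
              rw [Equiv.swap_apply_of_ne_of_ne hσjv hσjw]
              exact h2 j hjc
      · -- case B
        have hPhiσ : Phi σ = (Equiv.swap c j₀).trans σ := by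
          rw [hPhidef]; simp only [← hj₀def, if_neg hb]
        rw [Finset.mem_coe, memD', hPhiσ]
        constructor
        · simp only [Equiv.trans_apply, Equiv.swap_apply_left]; exact hj₀
        · intro j hjc
          simp only [Equiv.trans_apply]
          rcases eq_or_ne j j₀ with rfl | hjj₀
          · rw [Equiv.swap_apply_right, h1]
            exact Ne.symm hb
          · rw [Equiv.swap_apply_of_ne_of_ne hjc hjj₀]
            exact h2 j hjc
    · -- injective
      intro σ hσ τ hτ hPhi
      -- invariant : (Phi σ).symm w
      have inv : ∀ ρ : Equiv.Perm (Fin r), ρ ∈ Hit f' \ Hit f →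
          (if f (ρ.symm v) = w then (Phi ρ).symm w = ι (ρ.symm v)
           else (Phi ρ).symm w = ρ.symm v) := by
        intro ρ hρ
        obtain ⟨h1, h2⟩ := memD.mp hρ
        have hj₀ : ρ (ρ.symm v) = v := ρ.apply_symm_apply v
        by_cases hb : f (ρ.symm v) = w
        · rw [if_pos hb]
          have hPhiρ : Phi ρ = ((Equiv.swap (ρ.symm v) (ι (ρ.symm v))).trans ρ).trans
              (Equiv.swap v w) := by rw [hPhidef]; simp only [if_pos hb]
          rw [Equiv.symm_apply_eq, hPhiρ]
          simp only [Equiv.trans_apply]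
          rw [Equiv.swap_apply_right, hj₀, Equiv.swap_apply_left]
        · rw [if_neg hb]
          have hPhiρ : Phi ρ = (Equiv.swap c (ρ.symm v)).trans ρ := by
            rw [hPhidef]; simp only [if_neg hb]
          rw [Equiv.symm_apply_eq, hPhiρ]
          simp only [Equiv.trans_apply]
          rw [Equiv.swap_apply_right, h1]
      have invσ := inv σ hσ
      have invτ := inv τ hτ
      obtain ⟨hσ1, hσ2⟩ := memD.mp hσ
      obtain ⟨hτ1, hτ2⟩ := memD.mp hτ
      have hσj₀ : σ (σ.symm v) = v := σ.apply_symm_apply v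
      have hτj₀ : τ (τ.symm v) = v := τ.apply_symm_apply v
      have hσj₀c : σ.symm v ≠ c := by
        intro h; rw [h, hσ1] at hσj₀; exact hvw hσj₀.symm
      have hτj₀c : τ.symm v ≠ c := by
        intro h; rw [h, hτ1] at hτj₀; exact hvw hτj₀.symm
      by_cases hbσ : f (σ.symm v) = w <;> by_cases hbτ : f (τ.symm v) = w
      · rw [if_pos hbσ] at invσ
        rw [if_pos hbτ] at invτ
        have hιeq : ι (σ.symm v) = ι (τ.symm v) := by rw [← invσ, ← invτ, hPhi]
        have hj₀eq : σ.symm v = τ.symm v :=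
          hι2 _ _ (mem_fib.mpr hbσ) (mem_fib.mpr hbτ) hιeq
        have hPhiσ : Phi σ = ((Equiv.swap (σ.symm v) (ι (σ.symm v))).trans σ).trans
            (Equiv.swap v w) := by rw [hPhidef]; simp only [if_pos hbσ]
        have hPhiτ : Phi τ = ((Equiv.swap (τ.symm v) (ι (τ.symm v))).trans τ).trans
            (Equiv.swap v w) := by rw [hPhidef]; simp only [if_pos hbτ]
        ext x
        have h := DFunLike.congr_fun hPhi (Equiv.swap (σ.symm v) (ι (σ.symm v)) x)
        rw [hPhiσ, hPhiτ, ← hj₀eq] at h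
        simp only [Equiv.trans_apply, Equiv.swap_apply_self] at h
        exact congrArg Fin.val ((Equiv.swap v w).injective h)
      · exfalso
        rw [if_pos hbσ] at invσ
        rw [if_neg hbτ] at invτ
        have : ι (σ.symm v) = τ.symm v := by rw [← invσ, ← invτ, hPhi]
        have hmem := hι1 _ (mem_fib.mpr hbσ)
        rw [this] at hmem
        have : f (τ.symm v) = v := mem_fib.mp (Finset.mem_erase.mp hmem).2
        exact hτ2 _ hτj₀c (hτj₀.trans this.symm)
      · exfalso
        rw [if_neg hbσ] at invσ
        rw [if_pos hbτ] at invτ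
        have : ι (τ.symm v) = σ.symm v := by rw [← invσ, ← invτ, hPhi]
        have hmem := hι1 _ (mem_fib.mpr hbτ)
        rw [this] at hmem
        have : f (σ.symm v) = v := mem_fib.mp (Finset.mem_erase.mp hmem).2
        exact hσ2 _ hσj₀c (hσj₀.trans this.symm)
      · rw [if_neg hbσ] at invσ
        rw [if_neg hbτ] at invτ
        have hj₀eq : σ.symm v = τ.symm v := by rw [← invσ, ← invτ, hPhi]
        have hPhiσ : Phi σ = (Equiv.swap c (σ.symm v)).trans σ := by
          rw [hPhidef]; simp only [if_neg hbσ]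
        have hPhiτ : Phi τ = (Equiv.swap c (τ.symm v)).trans τ := by
          rw [hPhidef]; simp only [if_neg hbτ]
        ext x
        have h := DFunLike.congr_fun hPhi (Equiv.swap c (σ.symm v) x)
        rw [hPhiσ, hPhiτ, ← hj₀eq] at h
        simp only [Equiv.trans_apply, Equiv.swap_apply_self] at h
        exact congrArg Fin.val h
  calc (Hit f').card = (Hit f' ∩ Hit f).card + (Hit f' \ Hit f).card :=
        (Finset.card_inter_add_card_sdiff _ _).symm
    _ ≤ (Hit f ∩ Hit f').card + (Hit f \ Hit f').card := by
        rw [Finset.inter_comm]; exact Nat.add_le_add le_rfl key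
    _ = (Hit f).card := Finset.card_inter_add_card_sdiff _ _

lemma exists_perm_comp {α β : Type*} [Fintype α] [DecidableEq α] [DecidableEq β]
    (g h : α → β)
    (H : ∀ b, (univ.filter fun a => g a = b).card = (univ.filter fun a => h a = b).card) :
    ∃ ρ : Equiv.Perm α, ∀ a, h (ρ a) = g a := by
  classical
  have e : ∀ b : β, {a // g a = b} ≃ {a // h a = b} := by
    intro b
    apply Fintype.equivOfCardEq
    rw [Fintype.card_subtype, Fintype.card_subtype]
    exact H b
  refine ⟨((Equiv.sigmaFiberEquiv g).symm.trans
    ((Equiv.sigmaCongrRight e).trans (Equiv.sigmaFiberEquiv h))), fun a => ?_⟩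
  simp only [Equiv.trans_apply, Equiv.sigmaFiberEquiv, Equiv.sigmaCongrRight,
    Equiv.coe_fn_symm_mk, Equiv.coe_fn_mk]
  exact (e (g a) ⟨a, rfl⟩).2

lemma Hit_card_relabel (f g : Fin r → Fin r) (π ρ : Equiv.Perm (Fin r))
    (h : ∀ j, g (ρ j) = π (f j)) : (Hit f).card = (Hit g).card := by
  classical
  apply Finset.card_bij' (fun σ _ => (ρ.symm.trans σ).trans π)
    (fun τ _ => (ρ.trans τ).trans π.symm)
  · intro σ hσ
    obtain ⟨j, hj⟩ := mem_Hit.mp hσ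
    refine mem_Hit.mpr ⟨ρ j, ?_⟩
    simp only [Equiv.trans_apply, Equiv.symm_apply_apply]
    rw [hj, ← h]
  · intro τ hτ
    obtain ⟨j, hj⟩ := mem_Hit.mp hτ
    refine mem_Hit.mpr ⟨ρ.symm j, ?_⟩
    simp only [Equiv.trans_apply, Equiv.apply_symm_apply]
    rw [hj]
    have := h (ρ.symm j)
    rw [Equiv.apply_symm_apply] at this
    rw [this, Equiv.symm_apply_apply]
  · intro σ _; ext x; simp
  · intro τ _; ext x; simp

lemma sum_fib_card {d : ℕ} {s : Finset (Fin r)} (g : Fin r → Fin r)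
    (hg1 : ∀ j, g j ∈ s) : ∑ v ∈ s, (fib g v).card = r := by
  have := Finset.card_eq_sum_card_fiberwise (f := g) (s := univ) (t := s)
    (fun x _ => hg1 x)
  simpa [fib] using this.symm

lemma count_big {d : ℕ} (hr : d + 1 < r) {s : Finset (Fin r)} (hs : s.card = d + 1)
    (g : Fin r → Fin r) (hg1 : ∀ j, g j ∈ s)
    (hg2 : ∀ v ∈ s, (fib g v).card = r / (d+1) ∨ (fib g v).card = r / (d+1) + 1) :
    (s.filter fun v => (fib g v).card = r / (d+1) + 1).card = r % (d + 1) := by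
  set q := r / (d + 1) with hq
  set k := (s.filter fun v => (fib g v).card = q + 1).card with hk
  have hsum := sum_fib_card (d := d) g hg1
  have hsplit := Finset.sum_filter_add_sum_filter_not s
    (fun v => (fib g v).card = q + 1) (fun v => (fib g v).card)
  have hkle : k ≤ d + 1 := hs ▸ Finset.card_filter_le _ _
  have hcards := Finset.card_filter_add_card_filter_not
    (s := s) (p := fun v => (fib g v).card = q + 1)
  rw [← hk, hs] at hcards
  have h1 : ∑ v ∈ s.filter (fun v => (fib g v).card = q + 1), (fib g v).card
      = k * (q + 1) := by
    rw [Finset.sum_congr rfl (fun v hv => (Finset.mem_filter.mp hv).2),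
      Finset.sum_const, smul_eq_mul, hk]
  have h2 : ∑ v ∈ s.filter (fun v => ¬(fib g v).card = q + 1), (fib g v).card
      = (s.filter (fun v => ¬(fib g v).card = q + 1)).card * q := by
    rw [Finset.sum_congr rfl (fun v hv => ?_), Finset.sum_const, smul_eq_mul]
    have hv' := Finset.mem_filter.mp hv
    rcases hg2 v hv'.1 with h | h
    · exact h
    · exact absurd h hv'.2
  have hr2 : r = (d + 1) * q + k := by
    rw [← hsum, ← hsplit, h1, h2]
    have he : (s.filter (fun v => ¬(fib g v).card = q + 1)).card = d + 1 - k := by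
      omega
    rw [he, Nat.sub_mul]
    have hq' : k * q ≤ (d + 1) * q := Nat.mul_le_mul_right q hkle
    have expand : k * (q + 1) = k * q + k := by ring
    omega
  have hmod := Nat.mod_add_div r (d + 1)
  have : (d+1) * (r / (d+1)) = (d+1) * q := by rw [hq]
  rw [this] at hmod
  generalize (d + 1) * q = M at hr2 hmod
  omega

lemma fib_eq_empty {s : Finset (Fin r)} (g : Fin r → Fin r)
    (hg1 : ∀ j, g j ∈ s) {v : Fin r} (hv : v ∉ s) : fib g v = ∅ := by
  rw [fib, Finset.filter_eq_empty_iff]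
  intro j _
  intro h
  exact hv (h ▸ hg1 j)

lemma kappa_count {d : ℕ} (hr : d + 1 < r) {s : Finset (Fin r)} (hs : s.card = d + 1)
    (g : Fin r → Fin r) (hg1 : ∀ j, g j ∈ s)
    (hg2 : ∀ v ∈ s, (fib g v).card = r / (d+1) ∨ (fib g v).card = r / (d+1) + 1)
    (n : ℕ) :
    (univ.filter fun v => (fib g v).card = n).card =
      if n = 0 then r - (d + 1)
      else if n = r / (d+1) + 1 then r % (d + 1)
      else if n = r / (d+1) then (d + 1) - r % (d + 1) else 0 := by
  set q := r / (d + 1) with hq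
  have hq1 : 1 ≤ q := (Nat.one_le_div_iff (by omega)).mpr (by omega)
  rcases eq_or_ne n 0 with rfl | hn0
  · rw [if_pos rfl]
    have : (univ.filter fun v => (fib g v).card = 0) = sᶜ := by
      ext v
      simp only [Finset.mem_filter, Finset.mem_univ, true_and, Finset.mem_compl]
      constructor
      · intro h hv
        rcases hg2 v hv with h' | h' <;> omega
      · intro hv
        rw [fib_eq_empty g hg1 hv, Finset.card_empty]
    rw [this, Finset.card_compl, hs, Fintype.card_fin]
  · rw [if_neg hn0]
    have hfil : (univ.filter fun v => (fib g v).card = n)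
        = s.filter fun v => (fib g v).card = n := by
      ext v
      simp only [Finset.mem_filter, Finset.mem_univ, true_and]
      constructor
      · intro h
        refine ⟨?_, h⟩
        by_contra hv
        rw [fib_eq_empty g hg1 hv, Finset.card_empty] at h
        exact hn0 h.symm
      · exact fun h => h.2
    rcases eq_or_ne n (q + 1) with rfl | hn1
    · rw [if_pos rfl, hfil]
      exact count_big hr hs g hg1 hg2
    · rw [if_neg hn1]
      rcases eq_or_ne n q with rfl | hn2
      · rw [if_pos rfl, hfil]
        have hcb := count_big hr hs g hg1 hg2
        rw [← hq] at hcb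
        have hsplit := Finset.card_filter_add_card_filter_not
          (s := s) (p := fun v => (fib g v).card = q + 1)
        have : (s.filter fun v => ¬(fib g v).card = q + 1)
            = s.filter fun v => (fib g v).card = q := by
          apply Finset.filter_congr
          intro v hv
          rcases hg2 v hv with h | h <;> simp [h]
        rw [this] at hsplit
        rw [hs, hcb] at hsplit
        rw [← hcb]
        omega
      · rw [if_neg hn2, hfil, Finset.card_eq_zero, Finset.filter_eq_empty_iff]
        intro v hv
        rcases hg2 v hv with h | h <;> omega

lemma fib_update_other (f : Fin r → Fin r) (c u : Fin r) {x : Fin r}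
    (hx1 : x ≠ f c) (hx2 : x ≠ u) : fib (Function.update f c u) x = fib f x := by
  ext j
  rw [mem_fib, mem_fib]
  rcases eq_or_ne j c with rfl | hj
  · rw [Function.update_self]
    constructor
    · intro h; exact absurd h.symm hx2
    · intro h; exact absurd h.symm hx1
  · rw [Function.update_of_ne hj]

lemma fib_update_src (f : Fin r → Fin r) (c u : Fin r) (hu : u ≠ f c) :
    fib (Function.update f c u) (f c) = (fib f (f c)).erase c := by
  ext j
  rw [mem_fib, Finset.mem_erase, mem_fib]
  rcases eq_or_ne j c with rfl | hj
  · rw [Function.update_self]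
    constructor
    · intro h; exact absurd h.symm (Ne.symm hu)
    · intro h; exact absurd rfl h.1
  · rw [Function.update_of_ne hj]
    exact ⟨fun h => ⟨hj, h⟩, fun h => h.2⟩

lemma fib_update_tgt (f : Fin r → Fin r) (c u : Fin r) (hu : u ≠ f c) :
    fib (Function.update f c u) u = insert c (fib f u) := by
  ext j
  rw [mem_fib, Finset.mem_insert, mem_fib]
  rcases eq_or_ne j c with rfl | hj
  · rw [Function.update_self]
    simp
  · rw [Function.update_of_ne hj]
    constructor
    · exact fun h => Or.inr h
    · rintro (h | h)
      · exact absurd h hj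
      · exact h

lemma toBalanced {d : ℕ} (hr : d + 1 < r) {s : Finset (Fin r)} (hs : s.card = d + 1)
    (f : Fin r → Fin r) (hf : ∀ j, f j ∈ s) :
    ∃ g : Fin r → Fin r, (∀ j, g j ∈ s) ∧
      (∀ v ∈ s, (fib g v).card = r / (d+1) ∨ (fib g v).card = r / (d+1) + 1) ∧
      (Hit g).card ≤ (Hit f).card := by
  classical
  suffices H : ∀ n (f : Fin r → Fin r), (∀ j, f j ∈ s) →
      (∑ v ∈ s, (fib f v).card ^ 2) ≤ n →
      ∃ g : Fin r → Fin r, (∀ j, g j ∈ s) ∧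
        (∀ v ∈ s, (fib g v).card = r / (d+1) ∨ (fib g v).card = r / (d+1) + 1) ∧
        (Hit g).card ≤ (Hit f).card by
    exact H _ f hf le_rfl
  intro n
  induction n with
  | zero =>
    intro f hf hsum
    exfalso
    have hsum0 : ∑ v ∈ s, (fib f v).card = r := by
      have := Finset.card_eq_sum_card_fiberwise (f := f) (s := univ) (t := s)
        (fun x _ => hf x)
      simpa [fib] using this.symm
    have : ∀ v ∈ s, (fib f v).card ^ 2 = 0 := by
      intro v hv
      have h1 : (fib f v).card ^ 2 ≤ ∑ v ∈ s, (fib f v).card ^ 2 :=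
        Finset.single_le_sum (f := fun v => (fib f v).card ^ 2)
          (fun _ _ => Nat.zero_le _) hv
      omega
    have : ∀ v ∈ s, (fib f v).card = 0 := by
      intro v hv
      have := this v hv
      nlinarith [sq_nonneg (fib f v).card]
    rw [Finset.sum_congr rfl this] at hsum0
    simp at hsum0
    omega
  | succ n ih =>
    intro f hf hsum
    by_cases hbal : ∀ v ∈ s, ∀ u ∈ s, (fib f v).card ≤ (fib f u).card + 1
    · -- balanced already
      refine ⟨f, hf, ?_, le_rfl⟩
      obtain ⟨u₀, hu₀s, hu₀min⟩ := Finset.exists_min_image s (fun v => (fib f v).card)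
        (Finset.card_pos.mp (by omega))
      set m := (fib f u₀).card with hm
      have hub : ∀ v ∈ s, (fib f v).card = m ∨ (fib f v).card = m + 1 := by
        intro v hv
        have h1 := hu₀min v hv
        have h2 := hbal v hv u₀ hu₀s
        omega
      -- identify m with r / (d+1)
      have hsum0 : ∑ v ∈ s, (fib f v).card = r := by
        have := Finset.card_eq_sum_card_fiberwise (f := f) (s := univ) (t := s)
          (fun x _ => hf x)
        simpa [fib] using this.symm
      -- bounds : m*(d+1) ≤ r ≤ m*(d+1) + d
      have hlow : m * (d + 1) ≤ r := by
        rw [← hsum0, ← hs]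
        calc m * s.card = ∑ _v ∈ s, m := by rw [Finset.sum_const, smul_eq_mul, mul_comm]
          _ ≤ ∑ v ∈ s, (fib f v).card := Finset.sum_le_sum (fun v hv => hu₀min v hv)
      have hhigh : r ≤ m * (d + 1) + d := by
        have hsplit : s = insert u₀ (s.erase u₀) := (Finset.insert_erase hu₀s).symm
        have h1 : ∑ v ∈ s, (fib f v).card
            = m + ∑ v ∈ s.erase u₀, (fib f v).card := by
          rw [← Finset.add_sum_erase s _ hu₀s]
        have h2 : ∑ v ∈ s.erase u₀, (fib f v).card ≤ ∑ _v ∈ s.erase u₀, (m+1) :=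
          Finset.sum_le_sum (fun v hv => by
            have := hub v (Finset.mem_of_mem_erase hv); omega)
        rw [Finset.sum_const, smul_eq_mul, Finset.card_erase_of_mem hu₀s, hs] at h2
        have hcard : (d + 1) - 1 = d := by omega
        rw [hcard] at h2
        have : r ≤ m + d * (m + 1) := by omega
        calc r ≤ m + d * (m+1) := this
          _ = m * (d+1) + d := by ring
      have hmq : m = r / (d + 1) := by
        have hi : r < (m + 1) * (d + 1) := by
          have hexp : (m + 1) * (d + 1) = m * (d + 1) + (d + 1) := by ring
          omega
        exact (Nat.div_eq_of_lt_le hlow hi).symm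
      intro v hv
      rw [← hmq]
      exact hub v hv
    · -- exchange step
      push_neg at hbal
      obtain ⟨v, hvs, u, hus, hlt⟩ := hbal
      have hvu : v ≠ u := by
        intro h; rw [h] at hlt; omega
      have hfibv : (fib f v).Nonempty := by
        rw [← Finset.card_pos]; omega
      obtain ⟨c, hc⟩ := hfibv
      have hfc : f c = v := mem_fib.mp hc
      have huv : u ≠ f c := by rw [hfc]; exact Ne.symm hvu
      set f' := Function.update f c u with hf'
      have hf'mem : ∀ j, f' j ∈ s := by
        intro j
        rw [hf', Function.update_apply]
        split
        · exact hus
        · exact hf j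
      have hev : fib f' v = (fib f v).erase c := by
        rw [← hfc]; exact fib_update_src f c u huv
      have heu : fib f' u = insert c (fib f u) := fib_update_tgt f c u huv
      have hcu : c ∉ fib f u := by
        rw [mem_fib, hfc]; exact hvu
      have hcardv : (fib f' v).card = (fib f v).card - 1 := by
        rw [hev, Finset.card_erase_of_mem hc]
      have hcardu : (fib f' u).card = (fib f u).card + 1 := by
        rw [heu, Finset.card_insert_of_notMem hcu]
      have hother : ∀ x ∈ (s.erase v).erase u, (fib f' x).card = (fib f x).card := by
        intro x hx
        have hxu : x ≠ u := (Finset.mem_erase.mp hx).1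
        have hxv : x ≠ v := (Finset.mem_erase.mp (Finset.mem_of_mem_erase hx)).1
        rw [fib_update_other f c u (hfc ▸ hxv) hxu]
      -- sum decreases
      have husev : u ∈ s.erase v := Finset.mem_erase.mpr ⟨Ne.symm hvu, hus⟩
      have hsum_f : ∑ x ∈ s, (fib f x).card ^ 2
          = (fib f v).card ^ 2 + ((fib f u).card ^ 2
            + ∑ x ∈ (s.erase v).erase u, (fib f x).card ^ 2) := by
        rw [← Finset.add_sum_erase _ _ hvs, ← Finset.add_sum_erase _ _ husev]
      have hsum_f' : ∑ x ∈ s, (fib f' x).card ^ 2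
          = (fib f' v).card ^ 2 + ((fib f' u).card ^ 2
            + ∑ x ∈ (s.erase v).erase u, (fib f' x).card ^ 2) := by
        rw [← Finset.add_sum_erase _ _ hvs, ← Finset.add_sum_erase _ _ husev]
      have hsame : ∑ x ∈ (s.erase v).erase u, (fib f' x).card ^ 2
          = ∑ x ∈ (s.erase v).erase u, (fib f x).card ^ 2 :=
        Finset.sum_congr rfl (fun x hx => by rw [hother x hx])
      have hdec : ∑ x ∈ s, (fib f' x).card ^ 2 < ∑ x ∈ s, (fib f x).card ^ 2 := by
        rw [hsum_f, hsum_f', hsame]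
        have hkey : (fib f' v).card ^ 2 + (fib f' u).card ^ 2
            < (fib f v).card ^ 2 + (fib f u).card ^ 2 := by
          rw [hcardv, hcardu]
          set a := (fib f v).card
          set b := (fib f u).card
          have hab : b + 2 ≤ a := by omega
          obtain ⟨t, ht⟩ := Nat.exists_eq_add_of_le hab
          rw [ht]
          have h1 : b + 2 + t - 1 = b + 1 + t := by omega
          rw [h1]
          nlinarith
        omega
      have hHit : (Hit f').card ≤ (Hit f).card := by
        have := exchange f c u huv
          (by rw [hfc]; omega)
        rwa [← hf'] at this
      obtain ⟨g, hg1, hg2, hg3⟩ := ih f' hf'mem (by omega)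
      exact ⟨g, hg1, hg2, le_trans hg3 hHit⟩


lemma balanced_Hit_eq {d : ℕ} (hr : d + 1 < r) {s s' : Finset (Fin r)}
    (hs : s.card = d + 1) (hs' : s'.card = d + 1)
    (g g' : Fin r → Fin r) (hg1 : ∀ j, g j ∈ s)
    (hg2 : ∀ v ∈ s, (fib g v).card = r / (d+1) ∨ (fib g v).card = r / (d+1) + 1)
    (hg1' : ∀ j, g' j ∈ s')
    (hg2' : ∀ v ∈ s', (fib g' v).card = r / (d+1) ∨ (fib g' v).card = r / (d+1) + 1) :
    (Hit g).card = (Hit g').card := by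
  classical
  obtain ⟨π, hπ⟩ := exists_perm_comp (fun v => (fib g v).card)
    (fun v => (fib g' v).card) (fun n => by
      have h1 := kappa_count hr hs g hg1 hg2 n
      have h2 := kappa_count hr hs' g' hg1' hg2' n
      have e1 : (univ.filter fun a => (fib g a).card = n)
          = (univ.filter fun v => (fib g v).card = n) := rfl
      have e2 : (univ.filter fun a => (fib g' a).card = n)
          = (univ.filter fun v => (fib g' v).card = n) := rfl
      rw [e1, e2, h1, h2])
  obtain ⟨ρ, hρ⟩ := exists_perm_comp (fun j => π (g j)) g' (fun b => by
    have e1 : (univ.filter fun a => π (g a) = b)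
        = (univ.filter fun a => g a = π.symm b) := by
      apply Finset.filter_congr
      intro a _
      constructor
      · intro h; rw [← h, Equiv.symm_apply_apply]
      · intro h; rw [h, Equiv.apply_symm_apply]
    rw [e1]
    have e2 : (univ.filter fun a => g a = π.symm b).card
        = (fib g (π.symm b)).card := rfl
    have e3 : (univ.filter fun a => g' a = b).card = (fib g' b).card := rfl
    rw [e2, e3, ← hπ (π.symm b), Equiv.apply_symm_apply])
  exact Hit_card_relabel g g' π ρ hρ

end Stmt13Aux

open Stmt13Aux in
/-- Among `r × r` `{0,1}`-matrices such that (1) every column has a nonzero entry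
and (2) some `d+1` rows meet every column, the probability that a random
permutation hits a nonzero entry is minimized by a matrix each of whose columns
has exactly one nonzero entry, lying in one of `d+1` distinguished rows, each such
row carrying either `⌊r/(d+1)⌋` or `⌈r/(d+1)⌉` ones. -/
theorem stmt_13 (r d : ℕ) (hr : d + 1 < r) :
    ∃ (T₀ : Fin r → Fin r → Bool) (s₀ : Finset (Fin r)),
      s₀.card = d + 1 ∧
      -- each column of T₀ has exactly one nonzero entry, located in a row of s₀
      (∀ j, ∃! i, T₀ i j = true) ∧
      (∀ j i, T₀ i j = true → i ∈ s₀) ∧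
      -- each distinguished row has ⌊r/(d+1)⌋ or ⌈r/(d+1)⌉ ones
      (∀ i ∈ s₀,
        (Finset.univ.filter fun j => T₀ i j = true).card = r / (d + 1) ∨
        (Finset.univ.filter fun j => T₀ i j = true).card = (r + d) / (d + 1)) ∧
      -- T₀ minimizes the hitting probability among all admissible matrices
      (∀ T : Fin r → Fin r → Bool,
        (∀ j, ∃ i, T i j = true) →
        (∃ s : Finset (Fin r), s.card = d + 1 ∧ ∀ j, ∃ i ∈ s, T i j = true) →
        ((Finset.univ.filter fun σ : Equiv.Perm (Fin r) =>
            ∃ j, T₀ (σ j) j = true).card : ℝ) / (r ! : ℝ) ≤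
        ((Finset.univ.filter fun σ : Equiv.Perm (Fin r) =>
            ∃ j, T (σ j) j = true).card : ℝ) / (r ! : ℝ)) := by
  classical
  obtain ⟨s₀, -, hs₀⟩ := Finset.exists_subset_card_eq
    (s := (Finset.univ : Finset (Fin r))) (n := d + 1)
    (by rw [Finset.card_univ, Fintype.card_fin]; omega)
  obtain ⟨i₀, hi₀⟩ : s₀.Nonempty := by rw [← Finset.card_pos, hs₀]; omega
  obtain ⟨f₀, hf₀1, hf₀2, -⟩ := toBalanced hr hs₀ (fun _ => i₀) (fun _ => hi₀)
  refine ⟨fun i j => decide (f₀ j = i), s₀, hs₀, ?_, ?_, ?_, ?_⟩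
  · intro j
    refine ⟨f₀ j, by simp, fun y hy => ?_⟩
    simp only [decide_eq_true_eq] at hy
    exact hy.symm
  · intro j i hi
    simp only [decide_eq_true_eq] at hi
    exact hi ▸ hf₀1 j
  · intro i hi
    have hfilter : (Finset.univ.filter fun j => decide (f₀ j = i) = true)
        = fib f₀ i := by
      ext j; simp [Stmt13Aux.fib]
    rw [hfilter]
    rcases hf₀2 i hi with h | h
    · exact Or.inl h
    · right
      -- r % (d+1) ≥ 1 since some fiber has size q+1
      have hcb := count_big hr hs₀ f₀ hf₀1 hf₀2
      have hmem : i ∈ s₀.filter fun v => (fib f₀ v).card = r / (d+1) + 1 :=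
        Finset.mem_filter.mpr ⟨hi, h⟩
      have hk1 : 1 ≤ r % (d + 1) := by
        have := Finset.card_pos.mpr ⟨i, hmem⟩
        omega
      have hklt : r % (d + 1) < d + 1 := Nat.mod_lt r (by omega)
      have hmd := Nat.mod_add_div r (d + 1)
      have hsplit : r + d = (d + 1) * (r / (d + 1)) + (r % (d + 1) + d) := by omega
      rw [h, hsplit, Nat.mul_add_div (by omega)]
      have : (r % (d + 1) + d) / (d + 1) = 1 :=
        Nat.div_eq_of_lt_le (by omega) (by omega)
      omega
  · intro T hT1 hT2
    obtain ⟨s, hscard, hTs⟩ := hT2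
    set fT : Fin r → Fin r := fun j => (hTs j).choose with hfT
    have hfTmem : ∀ j, fT j ∈ s := fun j => (hTs j).choose_spec.1
    have hfTtrue : ∀ j, T (fT j) j = true := fun j => (hTs j).choose_spec.2
    obtain ⟨g, hg1, hg2, hgle⟩ := toBalanced hr hscard fT hfTmem
    have hEq : (Hit f₀).card = (Hit g).card :=
      balanced_Hit_eq hr hs₀ hscard f₀ g hf₀1 hf₀2 hg1 hg2
    have hL : (Finset.univ.filter fun σ : Equiv.Perm (Fin r) =>
        ∃ j, (fun i j => decide (f₀ j = i)) (σ j) j = true) = Hit f₀ := by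
      ext σ
      simp [Hit, eq_comm]
    have hR : (Hit fT).card ≤ (Finset.univ.filter fun σ : Equiv.Perm (Fin r) =>
        ∃ j, T (σ j) j = true).card := by
      apply Finset.card_le_card
      intro σ hσ
      obtain ⟨j, hj⟩ := mem_Hit.mp hσ
      simp only [Finset.mem_filter, Finset.mem_univ, true_and]
      exact ⟨j, hj ▸ hfTtrue j⟩
    have hfinal : ((Finset.univ.filter fun σ : Equiv.Perm (Fin r) =>
        ∃ j, (fun i j => decide (f₀ j = i)) (σ j) j = true).card : ℕ)
        ≤ (Finset.univ.filter fun σ : Equiv.Perm (Fin r) =>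
        ∃ j, T (σ j) j = true).card := by
      rw [hL, hEq]
      exact le_trans hgle hR
    have hpos : (0 : ℝ) < (r ! : ℝ) := by
      exact_mod_cast Nat.factorial_pos r
    exact (div_le_div_iff_of_pos_right hpos).mpr (by exact_mod_cast hfinal)
end
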